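/- Let K be a compact Hausdorff space and let f : C(K) → ℂ be an orthogonally additive holomorphic function of bounded type with Taylor expansion f = ∑_{k≥1} P_k at zero, and for each k let μ_k be a complex regular Borel measure on K with P_k(x) = ∫_K x(t)^k dμ_k(t) for all x ∈ C(K). Then |μ_k|(K) ≤ ‖P_k‖ for every k, the series ∑_{k≥1} |μ_k|(K) converges, and there exists a finite positive Borel measure μ on K (namely μ = ∑_k |μ_k|) such that μ_k is absolutely continuous with respect to μ for every k. -/

import Mathlib

open MeasureTheory Filter Topology

/-- `f` is orthogonally additive when it is additive on orthogonal pairs. -/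
def IsOrthAdd {K : Type*} [TopologicalSpace K] [CompactSpace K]
    (f : C(K, ℂ) → ℂ) : Prop :=
  ∀ x y : C(K, ℂ), x * y = 0 → f (x + y) = f x + f y

/-- `P` is a continuous `k`-homogeneous polynomial on `C(K, ℂ)`. -/
def IsHomogPoly {K : Type*} [TopologicalSpace K] [CompactSpace K]
    (k : ℕ) (P : C(K, ℂ) → ℂ) : Prop :=
  ∃ M : ContinuousMultilinearMap ℂ (fun _ : Fin k => C(K, ℂ)) ℂ,
    ∀ x : C(K, ℂ), P x = M (fun _ => x)

/-- The norm `‖P‖ = sup_{‖x‖ ≤ 1} |P x|` of a polynomial on `C(K, ℂ)`. -/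
noncomputable def polyNorm {K : Type*} [TopologicalSpace K] [CompactSpace K]
    (P : C(K, ℂ) → ℂ) : ℝ :=
  sSup ((fun x => ‖P x‖) '' Metric.closedBall (0 : C(K, ℂ)) 1)

/-!
Writing `μₖ = wₖ mₖ` in polar form, pick a measurable `k`-th root `g` of `w̄ₖ`, so that
`∫ gᵏ wₖ dmₖ = mₖ(K)`. Approximating `g` in `L¹(mₖ)` by continuous functions and retracting
them radially onto the unit disc gives `x` in the unit ball of `C(K)` with `Pₖ(x)` close to
`mₖ(K)`, because `|aᵏ - bᵏ| ≤ k |a - b|` on the disc. Hence `mₖ(K) ≤ ‖Pₖ‖`, and bounded type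
makes `∑ ‖Pₖ‖` converge; the sum of the `mₖ` is then a finite measure dominating each of them.
-/

open Set

lemma norm_pow_sub_pow_le_of_norm_le_one {R : Type*} [NormedRing R] [NormOneClass R]
    {a b : R} (ha : ‖a‖ ≤ 1) (hb : ‖b‖ ≤ 1) (n : ℕ) :
    ‖a ^ n - b ^ n‖ ≤ n * ‖a - b‖ := by
  induction n with
  | zero => simp
  | succ n ih =>
    have hbn : ‖b ^ n‖ ≤ 1 := (norm_pow_le b n).trans (pow_le_one₀ (norm_nonneg _) hb)
    calc ‖a ^ (n + 1) - b ^ (n + 1)‖ = ‖a * (a ^ n - b ^ n) + (a - b) * b ^ n‖ := by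
          rw [pow_succ', pow_succ', mul_sub, sub_mul, (Commute.self_pow b n).eq, sub_add_sub_cancel]
      _ ≤ ‖a‖ * ‖a ^ n - b ^ n‖ + ‖a - b‖ * ‖b ^ n‖ :=
          (norm_add_le _ _).trans (add_le_add (norm_mul_le _ _) (norm_mul_le _ _))
      _ ≤ 1 * (n * ‖a - b‖) + ‖a - b‖ * 1 := by gcongr
      _ = (n + 1 : ℕ) * ‖a - b‖ := by push_cast; ring

section UnitBallRetraction

variable {E : Type*} [NormedAddCommGroup E] [NormedSpace ℝ E]

noncomputable def unitBallRetraction (z : E) : E := (max 1 ‖z‖)⁻¹ • z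

lemma continuous_unitBallRetraction : Continuous (unitBallRetraction : E → E) :=
  ((continuous_const.max continuous_norm).inv₀
    fun z => (zero_lt_one.trans_le (le_max_left 1 ‖z‖)).ne').smul continuous_id

lemma norm_unitBallRetraction_le_one (z : E) : ‖unitBallRetraction z‖ ≤ 1 := by
  rw [unitBallRetraction, norm_smul, norm_inv, Real.norm_of_nonneg (by positivity),
    inv_mul_le_iff₀ (by positivity), mul_one]
  exact le_max_right _ _

lemma norm_unitBallRetraction_sub_le {y : E} (hy : ‖y‖ ≤ 1) (z : E) :
    ‖unitBallRetraction z - y‖ ≤ 2 * ‖z - y‖ := by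
  have hdist : ‖unitBallRetraction z - z‖ ≤ ‖z - y‖ := by
    rcases le_or_gt ‖z‖ 1 with hz | hz
    · simp [unitBallRetraction, max_eq_left hz]
    · have hz0 : ‖z‖ ≠ 0 := by positivity
      calc ‖unitBallRetraction z - z‖ = ‖(‖z‖⁻¹ - 1) • z‖ := by
            rw [unitBallRetraction, max_eq_right hz.le, sub_smul, one_smul]
        _ = ‖z‖ - 1 := by
            rw [norm_smul, Real.norm_of_nonpos (by linarith [inv_lt_one_of_one_lt₀ hz]),
              neg_sub, sub_mul, inv_mul_cancel₀ hz0, one_mul]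
        _ ≤ ‖z‖ - ‖y‖ := by linarith
        _ ≤ ‖z - y‖ := norm_sub_norm_le z y
  calc ‖unitBallRetraction z - y‖ ≤ ‖unitBallRetraction z - z‖ + ‖z - y‖ :=
        norm_sub_le_norm_sub_add_norm_sub _ _ _
    _ ≤ 2 * ‖z - y‖ := by linarith

end UnitBallRetraction

lemma exists_continuous_norm_le_one_integral_norm_sub_le {X E : Type*} [TopologicalSpace X]
    [NormalSpace X] [MeasurableSpace X] [BorelSpace X] {μ : Measure X} [μ.WeaklyRegular]
    [NormedAddCommGroup E] [NormedSpace ℝ E] {g : X → E} (hg : Integrable g μ)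
    (hg1 : ∀ t, ‖g t‖ ≤ 1) {ε : ℝ} (hε : 0 < ε) :
    ∃ x : C(X, E), (∀ t, ‖x t‖ ≤ 1) ∧ ∫ t, ‖g t - x t‖ ∂μ ≤ ε := by
  obtain ⟨h, hgh, hh⟩ := hg.exists_boundedContinuous_integral_sub_le (half_pos hε)
  refine ⟨⟨unitBallRetraction ∘ h, continuous_unitBallRetraction.comp h.continuous⟩,
    fun t => norm_unitBallRetraction_le_one _, ?_⟩
  calc ∫ t, ‖g t - unitBallRetraction (h t)‖ ∂μ ≤ ∫ t, 2 * ‖g t - h t‖ ∂μ := by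
        refine integral_mono_of_nonneg (ae_of_all _ fun t => norm_nonneg _)
          ((hg.sub hh).norm.const_mul 2) (ae_of_all _ fun t => ?_)
        simpa only [norm_sub_rev (g t)] using norm_unitBallRetraction_sub_le (hg1 t) (h t)
    _ ≤ ε := by rw [integral_const_mul]; linarith

lemma exists_measurable_pow_mul_eq_one {X : Type*} [MeasurableSpace X] {w : X → ℂ}
    (hw : Measurable w) (hw0 : ∀ t, w t ≠ 0) {k : ℕ} (hk : k ≠ 0) :
    ∃ g : X → ℂ, Measurable g ∧ ∀ t, g t ^ k * w t = 1 :=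
  ⟨fun t => (w t)⁻¹ ^ ((k : ℂ)⁻¹), hw.inv.pow_const _, fun t => by
    rw [Complex.cpow_nat_inv_pow _ hk, inv_mul_cancel₀ (hw0 t)]⟩

section PowerIntegral

variable {X : Type*} [MeasurableSpace X] {μ : Measure X} [IsFiniteMeasure μ] {w : X → ℂ}

lemma integrable_pow_mul {x : X → ℂ} (hx : AEStronglyMeasurable x μ) (hx1 : ∀ t, ‖x t‖ ≤ 1)
    (hw : Measurable w) (hw1 : ∀ t, ‖w t‖ ≤ 1) (k : ℕ) :
    Integrable (fun t => x t ^ k * w t) μ :=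
  .of_bound ((hx.pow k).mul hw.aestronglyMeasurable) 1 (ae_of_all _ fun t => by
    rw [norm_mul, norm_pow]
    exact mul_le_one₀ (pow_le_one₀ (norm_nonneg _) (hx1 t)) (norm_nonneg _) (hw1 t))

lemma norm_integral_pow_mul_sub_le {g x : X → ℂ} (hg : AEStronglyMeasurable g μ)
    (hx : AEStronglyMeasurable x μ) (hg1 : ∀ t, ‖g t‖ ≤ 1) (hx1 : ∀ t, ‖x t‖ ≤ 1)
    (hw : Measurable w) (hw1 : ∀ t, ‖w t‖ ≤ 1) (k : ℕ) :
    ‖∫ t, g t ^ k * w t ∂μ - ∫ t, x t ^ k * w t ∂μ‖ ≤ k * ∫ t, ‖g t - x t‖ ∂μ := by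
  have hgx : Integrable (fun t => ‖g t - x t‖) μ :=
    .of_bound (hg.sub hx).norm 2 (ae_of_all _ fun t => by
      simpa using (norm_sub_le _ _).trans (by linarith [hg1 t, hx1 t]))
  rw [← integral_sub (integrable_pow_mul hg hg1 hw hw1 k) (integrable_pow_mul hx hx1 hw hw1 k),
    ← integral_const_mul]
  refine (norm_integral_le_integral_norm _).trans (integral_mono_of_nonneg
    (ae_of_all _ fun t => norm_nonneg _) (hgx.const_mul _) (ae_of_all _ fun t => ?_))
  calc ‖g t ^ k * w t - x t ^ k * w t‖ = ‖g t ^ k - x t ^ k‖ * ‖w t‖ := by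
        rw [← sub_mul, norm_mul]
    _ ≤ k * ‖g t - x t‖ * 1 :=
        mul_le_mul (norm_pow_sub_pow_le_of_norm_le_one (hg1 t) (hx1 t) k) (hw1 t)
          (norm_nonneg _) (by positivity)
    _ = k * ‖g t - x t‖ := mul_one _

end PowerIntegral

lemma norm_le_polyNorm {K : Type*} [TopologicalSpace K] [CompactSpace K] {Q : C(K, ℂ) → ℂ}
    {C : ℝ} (hQ : ∀ x : C(K, ℂ), ‖x‖ ≤ 1 → ‖Q x‖ ≤ C) {x : C(K, ℂ)} (hx : ‖x‖ ≤ 1) :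
    ‖Q x‖ ≤ polyNorm Q := by
  refine le_csSup ⟨C, ?_⟩ ⟨x, by simpa using hx, rfl⟩
  rintro - ⟨y, hy, rfl⟩
  exact hQ y (by simpa using hy)

theorem measureReal_univ_le_polyNorm_integral_pow_mul {K : Type*} [TopologicalSpace K]
    [CompactSpace K] [T2Space K] [MeasurableSpace K] [BorelSpace K] {μ : Measure K} [μ.Regular]
    {w : K → ℂ} (hw : Measurable w) (hw1 : ∀ t, ‖w t‖ = 1) {k : ℕ} (hk : k ≠ 0) :
    μ.real univ ≤ polyNorm (fun x : C(K, ℂ) => ∫ t, x t ^ k * w t ∂μ) := by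
  have hw1' : ∀ t, ‖w t‖ ≤ 1 := fun t => (hw1 t).le
  obtain ⟨g, hg, hgw⟩ := exists_measurable_pow_mul_eq_one hw (fun t => norm_ne_zero_iff.1 <|
    (hw1 t).trans_ne one_ne_zero) hk
  have hg1 : ∀ t, ‖g t‖ ≤ 1 := fun t => by
    have : ‖g t‖ ^ k = 1 := by simpa [hw1 t] using congrArg norm (hgw t)
    exact ((pow_eq_one_iff_of_nonneg (norm_nonneg _) hk).1 this).le
  have hQ : ∀ x : C(K, ℂ), ‖x‖ ≤ 1 → ‖∫ t, x t ^ k * w t ∂μ‖ ≤ 1 * μ.real univ := fun x hx =>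
    norm_integral_le_of_norm_le_const (ae_of_all _ fun t => by
      rw [norm_mul, norm_pow, hw1, mul_one]
      exact pow_le_one₀ (norm_nonneg _) ((x.norm_coe_le_norm t).trans hx))
  refine le_of_forall_pos_le_add fun ε hε => ?_
  have hk0 : (0 : ℝ) < k := Nat.cast_pos.2 (Nat.pos_of_ne_zero hk)
  obtain ⟨x, hx1, hgx⟩ := exists_continuous_norm_le_one_integral_norm_sub_le
    (.of_bound (μ := μ) hg.aestronglyMeasurable 1 (ae_of_all _ hg1)) hg1 (div_pos hε hk0)
  have hx : ‖x‖ ≤ 1 := (ContinuousMap.norm_le _ zero_le_one).2 hx1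
  calc μ.real univ = ‖∫ t, g t ^ k * w t ∂μ‖ := by simp [hgw, abs_of_nonneg measureReal_nonneg]
    _ ≤ ‖∫ t, x t ^ k * w t ∂μ‖ + ‖∫ t, g t ^ k * w t ∂μ - ∫ t, x t ^ k * w t ∂μ‖ :=
        norm_le_insert' _ _
    _ ≤ polyNorm (fun x : C(K, ℂ) => ∫ t, x t ^ k * w t ∂μ) + k * (ε / k) := by
        gcongr
        · exact norm_le_polyNorm hQ hx
        · exact (norm_integral_pow_mul_sub_le hg.aestronglyMeasurable
            x.continuous.aestronglyMeasurable hg1 hx1 hw hw1' k).trans (by gcongr)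
    _ = polyNorm (fun x : C(K, ℂ) => ∫ t, x t ^ k * w t ∂μ) + ε := by field_simp

lemma isFiniteMeasure_sum_of_summable {α ι : Type*} [MeasurableSpace α] {μ : ι → Measure α}
    [∀ i, IsFiniteMeasure (μ i)] (h : Summable fun i => (μ i).real univ) :
    IsFiniteMeasure (Measure.sum μ) := by
  refine ⟨?_⟩
  calc Measure.sum μ univ = ∑' i, ENNReal.ofReal ((μ i).real univ) := by
        simp [Measure.sum_apply _ MeasurableSet.univ, Measure.real]
    _ = ENNReal.ofReal (∑' i, (μ i).real univ) :=
        (ENNReal.ofReal_tsum_of_nonneg (fun _ => measureReal_nonneg) h).symm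
    _ < ⊤ := ENNReal.ofReal_lt_top

theorem taylor_measures_summable_and_dominated_general
    {K : Type*} [TopologicalSpace K] [CompactSpace K] [T2Space K]
    [MeasurableSpace K] [BorelSpace K]
    (P : ℕ → C(K, ℂ) → ℂ)
    (hb : ∀ r : ℝ, 0 < r → Summable (fun k : ℕ => polyNorm (P (k + 1)) * r ^ (k + 1)))
    (m : ℕ → Measure K) (w : ℕ → K → ℂ)
    (hreg : ∀ k, 1 ≤ k → (m k).Regular)
    (hwm : ∀ k, 1 ≤ k → Measurable (w k))
    (hw1 : ∀ k, 1 ≤ k → ∀ t, ‖w k t‖ = 1)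
    (hrep : ∀ k, 1 ≤ k → ∀ x : C(K, ℂ), P k x = ∫ t, (x t) ^ k * w k t ∂(m k)) :
    (∀ k, 1 ≤ k → (m k Set.univ).toReal ≤ polyNorm (P k)) ∧
    Summable (fun k : ℕ => (m (k + 1) Set.univ).toReal) ∧
    ∃ μ : Measure K, IsFiniteMeasure μ ∧ ∀ k, 1 ≤ k → m k ≪ μ := by
  have hnorm : ∀ k, 1 ≤ k → (m k univ).toReal ≤ polyNorm (P k) := fun k hk => by
    have := hreg k hk
    rw [funext (hrep k hk)]
    exact measureReal_univ_le_polyNorm_integral_pow_mul (hwm k hk) (hw1 k hk) (by omega)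
  have hsum : Summable fun k => (m (k + 1) univ).toReal :=
    (hb 1 one_pos).of_nonneg_of_le (fun _ => ENNReal.toReal_nonneg)
      fun k => by simpa using hnorm (k + 1) (by omega)
  have : ∀ k, IsFiniteMeasure (m (k + 1)) := fun k =>
    have := hreg (k + 1) (by omega)
    inferInstance
  refine ⟨hnorm, hsum, Measure.sum fun k => m (k + 1), isFiniteMeasure_sum_of_summable hsum,
    fun k hk => ?_⟩
  obtain ⟨j, rfl⟩ := Nat.exists_eq_add_of_le' hk
  exact Measure.absolutelyContinuous_sum_right j (Measure.AbsolutelyContinuous.refl _)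

/-- Let `f` be an orthogonally additive holomorphic function of bounded type on
`C(K)` with Taylor expansion `f = ∑_{k ≥ 1} Pₖ` at zero, and for each `k ≥ 1`
let `μₖ` be a complex regular Borel measure on `K` (encoded in polar form
`wₖ · mₖ`, with total variation `mₖ`) representing `Pₖ`.  Then
`|μₖ|(K) ≤ ‖Pₖ‖` for each `k ≥ 1`, the series `∑_{k ≥ 1} |μₖ|(K)` converges,
and there is a finite positive Borel measure `μ` on `K` with `μₖ ≪ μ` (i.e.
`|μₖ| = mₖ ≪ μ`) for all `k ≥ 1`. -/
theorem taylor_measures_summable_and_dominated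
    {K : Type*} [TopologicalSpace K] [CompactSpace K] [T2Space K]
    [MeasurableSpace K] [BorelSpace K]
    (f : C(K, ℂ) → ℂ) (P : ℕ → C(K, ℂ) → ℂ)
    (hP : ∀ k, 1 ≤ k → IsHomogPoly k (P k))
    (hf : ∀ x : C(K, ℂ), HasSum (fun k : ℕ => P (k + 1) x) (f x))
    (hb : ∀ r : ℝ, 0 < r → Summable (fun k : ℕ => polyNorm (P (k + 1)) * r ^ (k + 1)))
    (hOA : IsOrthAdd f)
    (m : ℕ → Measure K) (w : ℕ → K → ℂ)
    (hfin : ∀ k, 1 ≤ k → IsFiniteMeasure (m k))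
    (hreg : ∀ k, 1 ≤ k → (m k).Regular)
    (hwm : ∀ k, 1 ≤ k → Measurable (w k))
    (hw1 : ∀ k, 1 ≤ k → ∀ t, ‖w k t‖ = 1)
    (hrep : ∀ k, 1 ≤ k → ∀ x : C(K, ℂ), P k x = ∫ t, (x t) ^ k * w k t ∂(m k)) :
    (∀ k, 1 ≤ k → (m k Set.univ).toReal ≤ polyNorm (P k)) ∧
    Summable (fun k : ℕ => (m (k + 1) Set.univ).toReal) ∧
    ∃ μ : Measure K, IsFiniteMeasure μ ∧ ∀ k, 1 ≤ k → m k ≪ μ :=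
  taylor_measures_summable_and_dominated_general P hb m w hreg hwm hw1 hrep
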